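/- arXiv:2508.18668 — 2 statements merged into one kernel-verified Lean document; each statement's English description precedes it below -/
import Mathlib

section
/- Fix 0 < α < 1 and integers 1 ≤ x ≤ n. Let C₁,…,C_x be i.i.d. with P(C = c) = αΓ(c−α)/(Γ(1−α)c!) for c ≥ 1. Then P(Σ_{k=1}^x C_k = n) = α^x x! S_α(n,x) / n!, where S_α(n,x) = (1/(α^x x!)) Σ_{j=0}^{x} (−1)^j binom(x,j) (−jα)_n and (y)_n = y(y+1)⋯(y+n−1) denotes the rising factorial. -/
/-!
Each `C k` has generating function `∑_{c ≥ 1} αΓ(c - α) / (Γ(1 - α) c!) z^c = 1 - (1 - z)^α`: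
writing `Γ(c - α) = (-α)_c Γ(-α)` and `Γ(1 - α) = -α Γ(-α)`, its coefficients are `-(-α)_c / c!`,
the negatives of those of the formal power series `(1 - z)^α = rescale (-1) (binomialSeries α)`.
Independence makes the generating function of the sum the `x`-th power, and the binomial
expansion `(1 - (1 - z)^α)^x = ∑_j (-1)^j binom(x, j) (1 - z)^(jα)` has `n`-th coefficient
`∑_j (-1)^j binom(x, j) (-jα)_n / n!`.
-/

open MeasureTheory ProbabilityTheory Real Finset

/-- generalized Stirling number S_α(n,x) of Pitman -/
noncomputable def genStirling (α : ℝ) (n x : ℕ) : ℝ :=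
  (1 / (α ^ x * (Nat.factorial x : ℝ))) *
    ∑ j ∈ Finset.range (x + 1),
      (-1 : ℝ) ^ j * (Nat.choose x j : ℝ) * ∏ i ∈ Finset.range n, (-(j : ℝ) * α + i)

open PowerSeries
open scoped Nat

theorem descPochhammer_smeval_eq_prod_range {R : Type*} [CommRing R] (r : R) (n : ℕ) :
    (descPochhammer ℤ n).smeval r = ∏ j ∈ range n, (r - j) := by
  induction n with
  | zero => simp
  | succ n ih =>
    simp [descPochhammer_succ_right, Polynomial.smeval_mul, ih, prod_range_succ,
      Polynomial.smeval_sub, Polynomial.smeval_X, Polynomial.smeval_natCast]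

namespace PowerSeries

theorem binomialSeries_pow {R A : Type*} [CommRing R] [BinomialRing R] [Ring A] [Algebra R A]
    (r : R) (j : ℕ) : binomialSeries A r ^ j = binomialSeries A (j • r) := by
  induction j with
  | zero => simp
  | succ j ih => rw [pow_succ, ih, ← binomialSeries_add, succ_nsmul]

variable {K : Type*} [Field K] [CharZero K]

theorem coeff_rescale_neg_one_binomialSeries (a : K) (m : ℕ) :
    coeff m (rescale (-1) (binomialSeries K a)) = (∏ i ∈ range m, (-a + i)) / m ! := by
  rw [coeff_rescale, binomialSeries_coeff, Ring.choose_eq_smul,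
    descPochhammer_smeval_eq_prod_range]
  have : ∏ i ∈ range m, (-a + i) = (-1) ^ m * ∏ i ∈ range m, (a - i) := by
    simpa [neg_sub, sub_eq_neg_add] using prod_neg (s := range m) fun i : ℕ => a - i
  rw [this, smul_eq_mul, smul_eq_mul, mul_one]
  ring

theorem coeff_one_sub_rescale_binomialSeries_pow (a : K) (n x : ℕ) :
    coeff n ((1 - rescale (-1) (binomialSeries K a)) ^ x)
      = (∑ j ∈ range (x + 1), (-1) ^ j * x.choose j * ∏ i ∈ range n, (-j * a + i)) / n ! := by
  rw [sub_eq_neg_add, add_pow, map_sum, sum_div]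
  refine sum_congr rfl fun j _ => ?_
  rw [one_pow, mul_one, neg_pow, ← map_pow, binomialSeries_pow]
  have hC : ((-1) ^ j * rescale (-1) (binomialSeries K (j • a)) * (x.choose j : K⟦X⟧))
      = C ((-1 : K) ^ j * x.choose j) * rescale (-1) (binomialSeries K (j • a)) := by
    simp only [map_mul, map_pow, map_neg, map_one, map_natCast]
    ring
  rw [hC, coeff_C_mul, coeff_rescale_neg_one_binomialSeries, nsmul_eq_mul, ← neg_mul]
  ring

end PowerSeries

theorem Real.Gamma_add_nat_eq_prod_mul {s : ℝ} (hs : ∀ k : ℕ, s ≠ -k) (m : ℕ) :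
    Gamma (s + m) = (∏ i ∈ range m, (s + i)) * Gamma s := by
  induction m with
  | zero => simp
  | succ m ih =>
    have hsm : s + m ≠ 0 := fun h => hs m (by linarith)
    rw [Nat.cast_succ, ← add_assoc, Gamma_add_one hsm, ih, prod_range_succ]
    ring

theorem coeff_one_sub_rescale_binomialSeries_eq_Gamma {α : ℝ} (hα₀ : 0 < α) (hα₁ : α < 1)
    {c : ℕ} (hc : c ≠ 0) :
    coeff c (1 - rescale (-1) (binomialSeries ℝ α))
      = α * Gamma (c - α) / (Gamma (1 - α) * c !) := by
  have hα : ∀ k : ℕ, -α ≠ -k := by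
    intro k h
    rcases k with _ | k
    · linarith [neg_eq_zero.mp (h.trans (by simp))]
    · push_cast at h; linarith
  have hΓ₁ : Gamma (1 - α) = -α * Gamma (-α) := by
    rw [sub_eq_neg_add, Gamma_add_one (by linarith)]
  have hΓc : Gamma (c - α) = (∏ i ∈ range c, (-α + i)) * Gamma (-α) := by
    rw [sub_eq_neg_add, Gamma_add_nat_eq_prod_mul hα]
  have hΓ : Gamma (-α) ≠ 0 := Gamma_ne_zero hα
  rw [map_sub, coeff_one, if_neg hc, coeff_rescale_neg_one_binomialSeries, hΓ₁, hΓc]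
  field_simp
  ring

theorem ProbabilityTheory.iIndepFun.measureReal_sum_eq_coeff_prod {ι Ω : Type*} [Fintype ι]
    [MeasurableSpace Ω] {μ : Measure Ω} [IsFiniteMeasure μ] {X : ι → Ω → ℕ}
    (hindep : iIndepFun X μ) (hX : ∀ i, Measurable (X i)) (n : ℕ) :
    μ.real {ω | ∑ i, X i ω = n} = coeff n (∏ i, mk fun c => μ.real {ω | X i ω = c}) := by
  classical
  set E : (ι →₀ ℕ) → Set Ω := fun l => ⋂ i, {ω | X i ω = l i}
  have hcover : {ω | ∑ i, X i ω = n} = ⋃ l ∈ finsuppAntidiag univ n, E l := by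
    ext ω
    simp only [Set.mem_ofPred_eq, Set.mem_iUnion, mem_finsuppAntidiag, E, Set.mem_iInter]
    constructor
    · intro hω
      exact ⟨Finsupp.equivFunOnFinite.symm fun i => X i ω, by simpa using hω, fun i => by simp⟩
    · rintro ⟨l, ⟨hl, -⟩, hω⟩
      simp only [hω, hl]
  have hdisj :
      ((finsuppAntidiag univ n : Finset (ι →₀ ℕ)) : Set (ι →₀ ℕ)).PairwiseDisjoint E := by
    intro l _ l' _ hne
    refine Set.disjoint_left.mpr fun ω hω hω' => hne (Finsupp.ext fun i => ?_)
    simp only [E, Set.mem_iInter, Set.mem_ofPred_eq] at hω hω'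
    rw [← hω, ← hω']
  have hE : ∀ l, MeasurableSet (E l) := fun l =>
    .iInter fun i => hX i (measurableSet_singleton _)
  rw [hcover, measureReal_biUnion_finset hdisj fun l _ => hE l, coeff_prod]
  refine sum_congr rfl fun l _ => ?_
  simp only [coeff_mk, measureReal_def, E]
  rw [hindep.meas_iInter (s := fun i => {ω | X i ω = l i})
    fun i => ⟨{l i}, measurableSet_singleton _, rfl⟩, ENNReal.toReal_prod]

theorem stable_cluster_sum_distribution_general
    {Ω : Type*} [MeasurableSpace Ω] (μ : Measure Ω) [IsProbabilityMeasure μ]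
    (α : ℝ) (hα₀ : 0 < α) (hα₁ : α < 1) (n x : ℕ)
    (C : Fin x → Ω → ℕ) (hmeas : ∀ k, Measurable (C k))
    (hIndep : iIndepFun C μ)
    (hpos : ∀ k, ∀ᵐ ω ∂μ, 1 ≤ C k ω)
    (hpmf : ∀ (k : Fin x) (c : ℕ), 1 ≤ c →
      (μ {ω | C k ω = c}).toReal
        = α * Real.Gamma ((c : ℝ) - α) / (Real.Gamma (1 - α) * (Nat.factorial c : ℝ))) :
    (μ {ω | (∑ k, C k ω) = n}).toReal
      = α ^ x * (Nat.factorial x : ℝ) * genStirling α n x / (Nat.factorial n : ℝ) := by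
  have hlaw : ∀ k, (mk fun c => μ.real {ω | C k ω = c})
      = 1 - rescale (-1) (binomialSeries ℝ α) := by
    intro k
    ext c
    rw [coeff_mk, measureReal_def]
    rcases c.eq_zero_or_pos with rfl | hc
    · have hnull : μ {ω | C k ω = 0} = 0 :=
        measure_eq_zero_iff_ae_notMem.mpr ((hpos k).mono fun ω h h0 => by simp_all)
      rw [hnull, ENNReal.toReal_zero, map_sub, coeff_one, if_pos rfl,
        coeff_rescale_neg_one_binomialSeries]
      simp
    · rw [hpmf k c hc, coeff_one_sub_rescale_binomialSeries_eq_Gamma hα₀ hα₁ hc.ne']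
  rw [← measureReal_def, hIndep.measureReal_sum_eq_coeff_prod hmeas,
    prod_congr rfl fun k _ => hlaw k, prod_const, card_univ, Fintype.card_fin,
    coeff_one_sub_rescale_binomialSeries_pow, genStirling, ← mul_assoc,
    mul_one_div_cancel (by positivity), one_mul]

/-- if C₁,…,C_x are i.i.d. with P(C = c) = αΓ(c−α)/(Γ(1−α)c!) then
P(Σ C_k = n) = α^x x! S_α(n,x)/n!. -/
theorem stable_cluster_sum_distribution
    {Ω : Type*} [MeasurableSpace Ω] (μ : Measure Ω) [IsProbabilityMeasure μ]
    (α : ℝ) (hα₀ : 0 < α) (hα₁ : α < 1) (n x : ℕ) (hx : 1 ≤ x) (hxn : x ≤ n)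
    (C : Fin x → Ω → ℕ) (hmeas : ∀ k, Measurable (C k))
    (hIndep : iIndepFun C μ)
    (hpos : ∀ k, ∀ᵐ ω ∂μ, 1 ≤ C k ω)
    (hpmf : ∀ (k : Fin x) (c : ℕ), 1 ≤ c →
      (μ {ω | C k ω = c}).toReal
        = α * Real.Gamma ((c : ℝ) - α) / (Real.Gamma (1 - α) * (Nat.factorial c : ℝ))) :
    (μ {ω | (∑ k, C k ω) = n}).toReal
      = α ^ x * (Nat.factorial x : ℝ) * genStirling α n x / (Nat.factorial n : ℝ) :=
  stable_cluster_sum_distribution_general μ α hα₀ hα₁ n x C hmeas hIndep hpos hpmf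
end

section
/- Fix 0 < β < α < 1 and θ > −β. For integers m₁,…,m_k ≥ 1 with m = Σ m_j, define the PD(a,t)-EPPF p_{a,t}(m₁,…,m_k) = (∏_{i=1}^{k−1}(t+ia) / (t+1)_{m−1}) ∏_{j=1}^{k} (1−a)_{m_j−1}, where (y)_n is the rising factorial and the empty product is 1. Let r ≥ 1, let x₁,…,x_r ≥ 1 be integers with K = Σ_l x_l, and for each l ∈ {1,…,r} let c_{l,1},…,c_{l,x_l} ≥ 1 be integers with n_l = Σ_{k=1}^{x_l} c_{l,k}; set n = Σ_l n_l. Then p_{β/α, θ/α}(x₁,…,x_r) · p_{α,θ}(c_{1,1},…,c_{r,x_r}) = (∏_{l=1}^{r} p_{α,−β}(c_{l,1},…,c_{l,x_l})) · p_{β,θ}(n₁,…,n_r), where on the left the second factor is evaluated at all K counts c_{l,k}. -/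
open Finset

/-- rising factorial (y)_n = y(y+1)⋯(y+n−1) -/
noncomputable def risingFac (y : ℝ) (n : ℕ) : ℝ := ∏ i ∈ Finset.range n, (y + i)

/-- PD(a,t)-EPPF: p_{a,t}(m₁,…,m_k) =
(∏_{i=1}^{k−1}(t+ia) / (t+1)_{m−1}) ∏_j (1−a)_{m_j−1}, where m = Σ m_j. -/
noncomputable def eppf (a t : ℝ) {ι : Type*} [Fintype ι] (m : ι → ℕ) : ℝ :=
  (∏ i ∈ Finset.range (Fintype.card ι - 1), (t + (i + 1) * a))
      / risingFac (t + 1) ((∑ i, m i) - 1)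
    * ∏ i, risingFac (1 - a) (m i - 1)

/-!
By `∏_{i<k-1} (t + (i+1)a) = a^(k-1) (t/a + 1)_{k-1}`, the numerators of `p_{α,θ}` and of each
`p_{α,-β}` are powers of `α` times `(θ/α + 1)_{K-1}` and `(1 - β/α)_{x_l-1}`, while the numerator
of `p_{β,θ}` is `α^(r-1)` times that of `p_{β/α,θ/α}`. Then `(θ/α + 1)_{K-1}` and the
`(1-β)_{n_l-1}` cancel, and the powers of `α` match because `∑_l (x_l - 1) + (r - 1) = K - 1`.
-/

lemma risingFac_pos {y : ℝ} (hy : 0 < y) (n : ℕ) : 0 < risingFac y n :=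
  prod_pos fun i _ => by positivity

lemma prod_range_add_succ_mul_eq_pow_mul {a : ℝ} (ha : a ≠ 0) (t b : ℝ) (n : ℕ) :
    ∏ i ∈ range n, (t + (i + 1) * b) = a ^ n * ∏ i ∈ range n, (t / a + (i + 1) * (b / a)) := by
  rw [show a ^ n = ∏ _i ∈ range n, a by simp, ← prod_mul_distrib]
  refine prod_congr rfl fun i _ => ?_
  field_simp

lemma prod_range_add_succ_mul_eq_pow_mul_risingFac {a : ℝ} (ha : a ≠ 0) (t : ℝ) (n : ℕ) :
    ∏ i ∈ range n, (t + (i + 1) * a) = a ^ n * risingFac (t / a + 1) n := by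
  rw [prod_range_add_succ_mul_eq_pow_mul ha, div_self ha, risingFac]
  congr 1
  exact prod_congr rfl fun i _ => by ring

lemma eppf_eq_pow_mul_risingFac {a : ℝ} (ha : a ≠ 0) (t : ℝ) {ι : Type*} [Fintype ι]
    (m : ι → ℕ) :
    eppf a t m = a ^ (Fintype.card ι - 1) * risingFac (t / a + 1) (Fintype.card ι - 1)
      / risingFac (t + 1) (∑ i, m i - 1) * ∏ i, risingFac (1 - a) (m i - 1) := by
  rw [eppf, prod_range_add_succ_mul_eq_pow_mul_risingFac ha]

lemma sum_tsub_one_add_card_tsub_one {ι : Type*} [Fintype ι] {x : ι → ℕ} (hx : ∀ i, 1 ≤ x i) :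
    ∑ i, (x i - 1) + (Fintype.card ι - 1) = ∑ i, x i - 1 := by
  rcases isEmpty_or_nonempty ι with hι | hι
  · simp
  have hsum : ∑ i, (x i - 1) + Fintype.card ι = ∑ i, x i := by
    rw [← card_univ, card_eq_sum_ones, ← sum_add_distrib]
    exact sum_congr rfl fun i _ => Nat.sub_add_cancel (hx i)
  have := Fintype.card_pos (α := ι)
  omega

theorem pitman_coag_frag_duality_general
    (α β θ : ℝ) (hβ₀ : 0 < β) (hβα : β < α) (hα₁ : α < 1) (hθ : -β < θ)
    (r : ℕ) (x : Fin r → ℕ) (hx : ∀ l, 1 ≤ x l)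
    (c : (l : Fin r) → Fin (x l) → ℕ) :
    eppf (β / α) (θ / α) x * eppf α θ (fun p : (Σ l : Fin r, Fin (x l)) => c p.1 p.2)
      = (∏ l, eppf α (-β) (c l)) * eppf β θ (fun l => ∑ k, c l k) := by
  have hα : 0 < α := hβ₀.trans hβα
  have hθα : 0 < θ / α + 1 := by
    rw [div_add_one hα.ne']
    exact div_pos (by linarith) hα
  have hpow : α ^ (∑ l, x l - 1) = α ^ (∑ l, (x l - 1)) * α ^ (r - 1) := by
    rw [← pow_add, ← sum_tsub_one_add_card_tsub_one hx, Fintype.card_fin]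
  have hcoag : risingFac (θ / α + 1) (∑ l, x l - 1) ≠ 0 := (risingFac_pos hθα _).ne'
  have hfrag : ∏ l, risingFac (1 - β) (∑ k, c l k - 1) ≠ 0 :=
    prod_ne_zero_iff.mpr fun l _ => (risingFac_pos (by linarith) _).ne'
  simp only [eppf_eq_pow_mul_risingFac hα.ne' θ, eppf_eq_pow_mul_risingFac hα.ne' (-β)]
  rw [eppf, eppf, prod_range_add_succ_mul_eq_pow_mul hα.ne' θ β]
  simp only [Fintype.card_sigma, Fintype.sum_sigma, Fintype.prod_sigma, Fintype.card_fin,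
    neg_div, neg_add_eq_sub]
  rw [prod_mul_distrib, prod_div_distrib, prod_mul_distrib, prod_pow_eq_pow_sum, hpow]
  -- opaque atoms, so that `field_simp` cancels them instead of normalising inside them
  generalize risingFac (θ / α + 1) (∑ l, x l - 1) = R at hcoag ⊢
  generalize ∏ i ∈ range (r - 1), (θ / α + (i + 1) * (β / α)) = W
  field_simp

/-- Pitman's coagulation–fragmentation duality for the two-parameter
Poisson–Dirichlet family as an exact identity of EPPFs:
p_{β/α,θ/α}(x₁,…,x_r) · p_{α,θ}(all c_{l,k})
 = (∏_l p_{α,−β}(c_{l,1},…,c_{l,x_l})) · p_{β,θ}(n₁,…,n_r), n_l = Σ_k c_{l,k}. -/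
theorem pitman_coag_frag_duality
    (α β θ : ℝ) (hβ₀ : 0 < β) (hβα : β < α) (hα₁ : α < 1) (hθ : -β < θ)
    (r : ℕ) (hr : 1 ≤ r) (x : Fin r → ℕ) (hx : ∀ l, 1 ≤ x l)
    (c : (l : Fin r) → Fin (x l) → ℕ) (hc : ∀ l k, 1 ≤ c l k) :
    eppf (β / α) (θ / α) x * eppf α θ (fun p : (Σ l : Fin r, Fin (x l)) => c p.1 p.2)
      = (∏ l, eppf α (-β) (c l)) * eppf β θ (fun l => ∑ k, c l k) :=
  pitman_coag_frag_duality_general α β θ hβ₀ hβα hα₁ hθ r x hx c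
end
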